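/- The relation ⋞ on T-trees with the same root type is a total order: for any two T-trees C and C' with the same root type, C ⋞ C' or C' ⋞ C, and ⋞ is antisymmetric and transitive. -/
import Mathlib


/-- A T-tree: a node labeled by a type (ℕ), with children grouped into
    T-lists (one list per component type, in type order). -/
inductive TTree : Type where
  | node : ℕ → List (List TTree) → TTree

namespace TTree

/-- The root type (label) of a T-tree. -/
def label : TTree → ℕ
  | .node a _ => a

/-- The list of T-lists of a T-tree. -/
def tlists : TTree → List (List TTree)
  | .node _ ls => ls

/-- A T-tree is a leaf iff all its T-lists are empty. -/
def isLeaf : TTree → Bool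
  | .node _ ls => ls.all List.isEmpty

mutual
  /-- Comparison of T-trees: root types first, then the sequences of T-lists
      lexicographically by the T-list order ≪. -/
  def cmpT : TTree → TTree → Ordering
    | .node a ls, .node b ls' => (compare a b).then (cmpOuter ls ls')
  /-- Lexicographic comparison of sequences of T-lists by ≪
      (≪ compares T-lists by length first, then lexicographically by ⋞). -/
  def cmpOuter : List (List TTree) → List (List TTree) → Ordering
    | [], [] => .eq
    | [], _ :: _ => .lt
    | _ :: _, [] => .gt
    | l :: ls, l' :: ls' =>
        (((compare l.length l'.length).then (cmpInner l l')).then (cmpOuter ls ls'))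
  /-- Lexicographic comparison of equal-length T-lists by ⋞. -/
  def cmpInner : List TTree → List TTree → Ordering
    | [], [] => .eq
    | [], _ :: _ => .lt
    | _ :: _, [] => .gt
    | a :: as, b :: bs => (cmpT a b).then (cmpInner as bs)
end

/-- The order ⋞ on T-trees. -/
def le (C C' : TTree) : Prop := cmpT C C' ≠ .gt

/-- The order ≪ on T-lists: length first, then lexicographically by ⋞. -/
def lle (L L' : List TTree) : Prop :=
  ((compare L.length L'.length).then (cmpInner L L')) ≠ .gt

/-- Canonicity of a T-tree: every T-list sorted non-decreasingly by ⋞,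
    every subtree canonical. -/
inductive Canonical : TTree → Prop where
  | mk (a : ℕ) (ls : List (List TTree))
      (hsorted : ∀ L ∈ ls, L.Chain' le)
      (hrec : ∀ L ∈ ls, ∀ c ∈ L, Canonical c) :
      Canonical (.node a ls)

end TTree

namespace TTree

theorem then_eq_eq {o₁ o₂ : Ordering} : o₁.then o₂ = .eq ↔ o₁ = .eq ∧ o₂ = .eq := by
  cases o₁ <;> simp [Ordering.then]

theorem swap_then' (o₁ o₂ : Ordering) : (o₁.then o₂).swap = o₁.swap.then o₂.swap := by
  cases o₁ <;> rfl

theorem nat_compare_swap (a b : ℕ) : compare b a = (compare a b).swap := by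
  rcases lt_trichotomy a b with h | h | h
  · rw [compare_lt_iff_lt.2 h, compare_gt_iff_gt.2 h]; rfl
  · subst h; rw [compare_eq_iff_eq.2 rfl]; rfl
  · rw [compare_gt_iff_gt.2 h, compare_lt_iff_lt.2 h]; rfl

mutual
theorem eqT : ∀ a b : TTree, cmpT a b = .eq → a = b
  | .node x ls, .node y ms, h => by
    rw [cmpT, then_eq_eq] at h
    obtain ⟨h1, h2⟩ := h
    rw [compare_eq_iff_eq] at h1
    rw [h1, eqO ls ms h2]
theorem eqO : ∀ ls ms : List (List TTree), cmpOuter ls ms = .eq → ls = ms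
  | [], [], _ => rfl
  | [], _ :: _, h => by simp [cmpOuter] at h
  | _ :: _, [], h => by simp [cmpOuter] at h
  | l :: ls, m :: ms, h => by
    rw [cmpOuter, then_eq_eq, then_eq_eq] at h
    obtain ⟨⟨_, h1⟩, h2⟩ := h
    rw [eqI l m h1, eqO ls ms h2]
theorem eqI : ∀ as bs : List TTree, cmpInner as bs = .eq → as = bs
  | [], [], _ => rfl
  | [], _ :: _, h => by simp [cmpInner] at h
  | _ :: _, [], h => by simp [cmpInner] at h
  | a :: as, b :: bs, h => by
    rw [cmpInner, then_eq_eq] at h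
    rw [eqT a b h.1, eqI as bs h.2]
end

mutual
theorem swT : ∀ a b : TTree, cmpT b a = (cmpT a b).swap
  | .node x ls, .node y ms => by
    rw [cmpT, cmpT, swap_then', nat_compare_swap, swO ls ms]
theorem swO : ∀ ls ms : List (List TTree), cmpOuter ms ls = (cmpOuter ls ms).swap
  | [], [] => rfl
  | [], _ :: _ => rfl
  | _ :: _, [] => rfl
  | l :: ls, m :: ms => by
    rw [cmpOuter, cmpOuter, swap_then', swap_then', nat_compare_swap, swI l m, swO ls ms]
theorem swI : ∀ as bs : List TTree, cmpInner bs as = (cmpInner as bs).swap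
  | [], [] => rfl
  | [], _ :: _ => rfl
  | _ :: _, [] => rfl
  | a :: as, b :: bs => by
    rw [cmpInner, cmpInner, swap_then', swT a b, swI as bs]
end

theorem ltLen (p q r : List TTree)
    (hI : cmpInner p q = .lt → cmpInner q r = .lt → cmpInner p r = .lt)
    (h1 : (compare p.length q.length).then (cmpInner p q) = .lt)
    (h2 : (compare q.length r.length).then (cmpInner q r) = .lt) :
    (compare p.length r.length).then (cmpInner p r) = .lt := by
    rcases hpq : compare p.length q.length with _ | _ | _ <;> rw [hpq] at h1 <;>
      rcases hqr : compare q.length r.length with _ | _ | _ <;> rw [hqr] at h2 <;>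
      simp only [Ordering.then] at h1 h2
    · rw [compare_lt_iff_lt] at hpq hqr
      rw [compare_lt_iff_lt.2 (lt_trans hpq hqr)]; rfl
    · rw [compare_eq_iff_eq] at hqr; rw [← hqr, hpq]; rfl
    · exact absurd h2 (by simp)
    · rw [compare_eq_iff_eq] at hpq; rw [hpq, hqr]; rfl
    · rw [compare_eq_iff_eq] at hpq hqr
      rw [compare_eq_iff_eq.2 (hpq.trans hqr)]
      simp only [Ordering.then]
      exact hI h1 h2
    · exact absurd h2 (by simp)
    · exact absurd h1 (by simp)
    · exact absurd h1 (by simp)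
    · exact absurd h1 (by simp)

mutual
theorem ltT : ∀ a b c : TTree, cmpT a b = .lt → cmpT b c = .lt → cmpT a c = .lt
  | .node x ls, .node y ms, .node z ns, h1, h2 => by
    rw [cmpT] at h1 h2 ⊢
    rcases hxy : compare x y with _ | _ | _ <;> rw [hxy] at h1 <;>
      rcases hyz : compare y z with _ | _ | _ <;> rw [hyz] at h2 <;>
      simp only [Ordering.then] at h1 h2
    · rw [compare_lt_iff_lt] at hxy hyz
      rw [compare_lt_iff_lt.2 (lt_trans hxy hyz)]; rfl
    · rw [compare_eq_iff_eq] at hyz; rw [← hyz, hxy]; rfl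
    · exact absurd h2 (by simp)
    · rw [compare_eq_iff_eq] at hxy; rw [hxy, hyz]; rfl
    · rw [compare_eq_iff_eq] at hxy hyz
      rw [compare_eq_iff_eq.2 (hxy.trans hyz)]
      simp only [Ordering.then]
      exact ltO ls ms ns h1 h2
    · exact absurd h2 (by simp)
    · exact absurd h1 (by simp)
    · exact absurd h1 (by simp)
    · exact absurd h1 (by simp)
theorem ltO : ∀ ls ms ns : List (List TTree),
    cmpOuter ls ms = .lt → cmpOuter ms ns = .lt → cmpOuter ls ns = .lt
  | [], [], _, h1, _ => by simp [cmpOuter] at h1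
  | [], _ :: _, [], _, h2 => by simp [cmpOuter] at h2
  | [], _ :: _, _ :: _, _, _ => by simp [cmpOuter]
  | _ :: _, [], _, h1, _ => by simp [cmpOuter] at h1
  | _ :: _, _ :: _, [], _, h2 => by simp [cmpOuter] at h2
  | l :: ls, m :: ms, n :: ns, h1, h2 => by
    rw [cmpOuter] at h1 h2 ⊢
    rcases h1' : (compare l.length m.length).then (cmpInner l m) with _ | _ | _ <;>
      rw [h1'] at h1 <;>
      rcases h2' : (compare m.length n.length).then (cmpInner m n) with _ | _ | _ <;>
      rw [h2'] at h2 <;>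
      simp only [Ordering.then] at h1 h2
    · rw [ltLen l m n (ltI l m n) h1' h2']; rfl
    · rw [then_eq_eq] at h2'
      rw [eqI m n h2'.2] at h1'
      rw [h1']; rfl
    · exact absurd h2 (by simp)
    · rw [then_eq_eq] at h1'
      rw [eqI l m h1'.2, h2']; rfl
    · rw [then_eq_eq] at h1'
      rw [eqI l m h1'.2, h2']
      simp only [Ordering.then]
      exact ltO ls ms ns h1 h2
    · exact absurd h2 (by simp)
    · exact absurd h1 (by simp)
    · exact absurd h1 (by simp)
    · exact absurd h1 (by simp)
theorem ltI : ∀ as bs cs : List TTree,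
    cmpInner as bs = .lt → cmpInner bs cs = .lt → cmpInner as cs = .lt
  | [], [], _, h1, _ => by simp [cmpInner] at h1
  | [], _ :: _, [], _, h2 => by simp [cmpInner] at h2
  | [], _ :: _, _ :: _, _, _ => by simp [cmpInner]
  | _ :: _, [], _, h1, _ => by simp [cmpInner] at h1
  | _ :: _, _ :: _, [], _, h2 => by simp [cmpInner] at h2
  | a :: as, b :: bs, c :: cs, h1, h2 => by
    rw [cmpInner] at h1 h2 ⊢
    rcases hab : cmpT a b with _ | _ | _ <;> rw [hab] at h1 <;>
      rcases hbc : cmpT b c with _ | _ | _ <;> rw [hbc] at h2 <;>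
      simp only [Ordering.then] at h1 h2
    · rw [ltT a b c hab hbc]; rfl
    · rw [eqT b c hbc] at hab; rw [hab]; rfl
    · exact absurd h2 (by simp)
    · rw [eqT a b hab, hbc]; rfl
    · rw [eqT a b hab, hbc]
      simp only [Ordering.then]
      exact ltI as bs cs h1 h2
    · exact absurd h2 (by simp)
    · exact absurd h1 (by simp)
    · exact absurd h1 (by simp)
    · exact absurd h1 (by simp)
end

end TTree

/-- ⋞ is a total order on T-trees with the same root type:
    total, antisymmetric and transitive. -/
theorem ttree_le_totalOrder :
    (∀ C C' : TTree, C.label = C'.label → TTree.le C C' ∨ TTree.le C' C) ∧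
    (∀ C C' : TTree, C.label = C'.label →
      TTree.le C C' → TTree.le C' C → C = C') ∧
    (∀ C C' C'' : TTree, C.label = C'.label → C'.label = C''.label →
      TTree.le C C' → TTree.le C' C'' → TTree.le C C'') := by
  refine ⟨?_, ?_, ?_⟩
  · intro C C' _
    rcases h : TTree.cmpT C C' with _ | _ | _
    · left; simp [TTree.le, h]
    · left; simp [TTree.le, h]
    · right; rw [TTree.le, TTree.swT C C', h]; decide
  · intro C C' _ h1 h2
    rcases h : TTree.cmpT C C' with _ | _ | _
    · exfalso; apply h2; rw [TTree.swT C C', h]; rfl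
    · exact TTree.eqT C C' h
    · exact absurd h h1
  · intro C C' C'' _ _ h1 h2
    rcases h : TTree.cmpT C C' with _ | _ | _
    · rcases h' : TTree.cmpT C' C'' with _ | _ | _
      · rw [TTree.le, TTree.ltT C C' C'' h h']; simp
      · rw [TTree.le, ← TTree.eqT C' C'' h', h]; simp
      · exact absurd h' h2
    · rw [TTree.le, TTree.eqT C C' h]; exact h2
    · exact absurd h h1
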